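/- Let μ_1, μ_2 ∈ ℝ and σ_1^2, σ_2^2 > 0 satisfy σ_1^2 + σ_2^2 − σ_1^2·σ_2^2 > 0. Then the pairwise correlation of N(μ_1, σ_1^2) and N(μ_2, σ_2^2) relative to the standard Gaussian N(0,1) equals exp( −( μ_1^2·(σ_2^2 − 1) + 2·μ_1·μ_2 + μ_2^2·(σ_1^2 − 1) ) / ( 2·σ_1^2·(σ_2^2 − 1) − 2·σ_2^2 ) ) / √( σ_1^2 + σ_2^2 − σ_1^2·σ_2^2 ) − 1. -/

import Mathlib

open MeasureTheory ProbabilityTheory Matrix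

/-- The standard Gaussian measure on `ι → ℝ`. -/
noncomputable def stdGaussian (ι : Type*) [Fintype ι] : Measure (ι → ℝ) :=
  Measure.pi fun _ => gaussianReal 0 1

open Classical in
/-- Square root of a positive semidefinite matrix (junk value `0` otherwise). -/
noncomputable def matSqrt {ι : Type*} [Fintype ι] [DecidableEq ι]
    (A : Matrix ι ι ℝ) : Matrix ι ι ℝ :=
  if h : A.PosSemidef then
    h.1.eigenvectorUnitary.1 * diagonal ((↑) ∘ (√·) ∘ h.1.eigenvalues) *
      (star h.1.eigenvectorUnitary : Matrix ι ι ℝ)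
  else 0

/-- The centered Gaussian measure on `ι → ℝ` with covariance `A` (for `A` PSD),
realized as the pushforward of the standard Gaussian under `A ^ (1/2)`. -/
noncomputable def gaussianOf {ι : Type*} [Fintype ι] [DecidableEq ι]
    (A : Matrix ι ι ℝ) : Measure (ι → ℝ) :=
  (stdGaussian ι).map fun x => matSqrt A *ᵥ x

lemma measurable_matMulVec {ι : Type*} [Fintype ι] (M : Matrix ι ι ℝ) :
    Measurable fun x : ι → ℝ => M *ᵥ x := by
  refine measurable_pi_lambda _ fun i => ?_
  simpa [Matrix.mulVec, dotProduct] using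
    Finset.measurable_sum Finset.univ fun j _ => by fun_prop

instance stdGaussian.instIsProbabilityMeasure (ι : Type*) [Fintype ι] :
    IsProbabilityMeasure (stdGaussian ι) := by
  unfold _root_.stdGaussian; infer_instance

instance gaussianOf.instIsProbabilityMeasure {ι : Type*} [Fintype ι] [DecidableEq ι]
    (A : Matrix ι ι ℝ) : IsProbabilityMeasure (gaussianOf A) :=
  Measure.isProbabilityMeasure_map (measurable_matMulVec _).aemeasurable

/-- Loewner order: `A ⪯ B`. -/
def loewnerLE {ι : Type*} [Fintype ι] (A B : Matrix ι ι ℝ) : Prop := (B - A).PosSemidef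

/-- The Euclidean (`ℓ²`) operator norm of a matrix. -/
noncomputable def opNorm {d : ℕ} (M : Matrix (Fin d) (Fin d) ℝ) : ℝ :=
  ‖Matrix.toEuclideanCLM (𝕜 := ℝ) M‖

/-- Euclidean norm of a vector. -/
noncomputable def euclNorm {ι : Type*} [Fintype ι] (v : ι → ℝ) : ℝ :=
  Real.sqrt (v ⬝ᵥ v)

/-- Normalized probabilist's Hermite polynomial function. -/
noncomputable def hermiteFn (k : ℕ) (x : ℝ) : ℝ :=
  (Polynomial.aeval x (Polynomial.hermite k)) / Real.sqrt (Nat.factorial k)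

/-- The uniform distribution on the unit sphere, realized as the pushforward of the
standard Gaussian under normalization. -/
noncomputable def uniformSphere (d : ℕ) : Measure (Fin d → ℝ) :=
  (stdGaussian (Fin d)).map fun x => (euclNorm x)⁻¹ • x

private lemma aux5 (a1 a2 a0 aD av E1 E2 E0 G Ef : ℝ) (h1 : 0 < a1) (h2 : 0 < a2)
    (h0 : 0 < a0) (hd : 0 < aD) (hv : 0 < av) (hE0 : 0 < E0)
    (hc : a1 * a2 = a0 * (aD * av)) (he : E1 * E2 / E0 = G * Ef) :
    a1⁻¹ * E1 * (a2⁻¹ * E2) / (a0⁻¹ * E0) = G / aD * (av⁻¹ * Ef) := by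
  have he' : E1 * E2 = G * Ef * E0 := by
    rw [div_eq_iff hE0.ne'] at he; exact he
  field_simp
  rw [he', hc]
  ring

/-- Closed form for the pairwise correlation of two Gaussians relative
to the standard Gaussian: `χ_{N(0,1)}(N(μ₁,σ₁²), N(μ₂,σ₂²)) = exp(...)/√(σ₁²+σ₂²−σ₁²σ₂²) − 1`,
where the pairwise correlation is `∫ D₁·D₂/S − 1` (densities). -/
theorem statement5 (μ₁ μ₂ s₁ s₂ : ℝ) (h₁ : 0 < s₁) (h₂ : 0 < s₂)
    (h : 0 < s₁ + s₂ - s₁ * s₂) :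
    (∫ x, gaussianPDFReal μ₁ (Real.toNNReal s₁) x * gaussianPDFReal μ₂ (Real.toNNReal s₂) x /
        gaussianPDFReal 0 1 x) - 1
      = Real.exp (-(μ₁ ^ 2 * (s₂ - 1) + 2 * μ₁ * μ₂ + μ₂ ^ 2 * (s₁ - 1)) /
            (2 * s₁ * (s₂ - 1) - 2 * s₂)) /
          Real.sqrt (s₁ + s₂ - s₁ * s₂) - 1 := by
  set D : ℝ := s₁ + s₂ - s₁ * s₂ with hDdef
  have hD : (0:ℝ) < D := h
  have hv : (0:ℝ) < s₁ * s₂ / D := by positivity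
  set G : ℝ := Real.exp (-(μ₁ ^ 2 * (s₂ - 1) + 2 * μ₁ * μ₂ + μ₂ ^ 2 * (s₁ - 1)) /
      (2 * s₁ * (s₂ - 1) - 2 * s₂)) with hGdef
  have key : ∀ x : ℝ,
      gaussianPDFReal μ₁ (Real.toNNReal s₁) x * gaussianPDFReal μ₂ (Real.toNNReal s₂) x /
        gaussianPDFReal 0 1 x
      = (G / Real.sqrt D) *
        ((Real.sqrt (2 * Real.pi * (s₁ * s₂ / D)))⁻¹ *
          Real.exp (-(x - (μ₁ * s₂ + μ₂ * s₁) / D) ^ 2 / (2 * (s₁ * s₂ / D)))) := by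
    intro x
    simp only [gaussianPDFReal, Real.coe_toNNReal _ h₁.le, Real.coe_toNNReal _ h₂.le,
      NNReal.coe_one, hGdef]
    have hconst : Real.sqrt (2 * Real.pi * s₁) * Real.sqrt (2 * Real.pi * s₂)
        = Real.sqrt (2 * Real.pi * 1) * (Real.sqrt D * Real.sqrt (2 * Real.pi * (s₁ * s₂ / D))) := by
      rw [← Real.sqrt_mul (by positivity), ← Real.sqrt_mul (by positivity),
        ← Real.sqrt_mul (by positivity)]
      congr 1
      field_simp
    have hexp : Real.exp (-(x - μ₁) ^ 2 / (2 * s₁)) * Real.exp (-(x - μ₂) ^ 2 / (2 * s₂)) /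
        Real.exp (-(x - 0) ^ 2 / (2 * 1))
        = Real.exp (-(μ₁ ^ 2 * (s₂ - 1) + 2 * μ₁ * μ₂ + μ₂ ^ 2 * (s₁ - 1)) /
              (2 * s₁ * (s₂ - 1) - 2 * s₂)) *
          Real.exp (-(x - (μ₁ * s₂ + μ₂ * s₁) / D) ^ 2 / (2 * (s₁ * s₂ / D))) := by
      rw [← Real.exp_add, ← Real.exp_sub, ← Real.exp_add]
      congr 1
      have hden : 2 * s₁ * (s₂ - 1) - 2 * s₂ ≠ 0 := by
        have h2 : 2 * s₁ * (s₂ - 1) - 2 * s₂ = -2 * D := by rw [hDdef]; ring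
        rw [h2]
        simp only [neg_mul, ne_eq, neg_eq_zero]
        positivity
      have hD0 : D ≠ 0 := hD.ne'
      rw [show 2 * s₁ * (s₂ - 1) - 2 * s₂ = -2 * D by rw [hDdef]; ring]
      field_simp
      ring
    exact aux5 _ _ _ _ _ _ _ _ _ _ (by positivity) (by positivity) (by positivity)
      (Real.sqrt_pos.2 hD) (by positivity) (Real.exp_pos _) hconst hexp
  simp_rw [key]
  rw [MeasureTheory.integral_const_mul]
  have hint : (∫ x : ℝ, (Real.sqrt (2 * Real.pi * (s₁ * s₂ / D)))⁻¹ *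
      Real.exp (-(x - (μ₁ * s₂ + μ₂ * s₁) / D) ^ 2 / (2 * (s₁ * s₂ / D)))) = 1 := by
    have := integral_gaussianPDFReal_eq_one ((μ₁ * s₂ + μ₂ * s₁) / D)
      (v := Real.toNNReal (s₁ * s₂ / D)) (by simp [Real.toNNReal_eq_zero]; linarith)
    simpa [gaussianPDFReal, Real.coe_toNNReal _ hv.le] using this
  rw [hint, mul_one]
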